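/- Let β : (0,∞) → ℝ be continuously differentiable such that the function t ↦ β'(t)/t is nonincreasing on (0,∞) and there exist constants 0 < m ≤ M with m ≤ β'(t)/t ≤ M for all t > 0. Let C₁ > 0, C₂ ∈ ℝ, C₃ > 0, C₄ ≥ 0 and let p ≥ 3 be a real number. Define g : (0,∞) → ℝ by g(t) = C₁β(t) + C₂t⁴ − C₃t⁴·log t − C₄t^{2p−2}. Then g has a unique positive critical point t₀, i.e. there is exactly one t₀ > 0 with g'(t₀) = 0; moreover g'(t) > 0 for 0 < t < t₀ and g'(t) < 0 for t > t₀. -/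

import Mathlib

/-!
On `(0, ∞)` one has `g'(t) = t³ h(t)` with
`h(t) = C₁ (β'(t)/t) / t² + 4C₂ - C₃ (4 log t + 1) - C₄ (2p - 2) t^(2p-6)`.
Every summand of `h` is nonincreasing (using `p ≥ 3` and the monotonicity of `β'(t)/t`) and the
logarithmic one is strictly decreasing. Since `β'(t)/t ≥ m > 0`, `h` is positive near `0`; since
`β'(t)/t ≤ M`, the `-4C₃ log t` term makes it negative near `∞`. The intermediate value theorem
gives the unique zero `t₀` of `h`, hence of `g'`.
-/

open Set

noncomputable def gfun (C₁ C₂ C₃ C₄ p : ℝ) (β : ℝ → ℝ) (t : ℝ) : ℝ :=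
  C₁ * β t + C₂ * t ^ 4 - C₃ * t ^ 4 * Real.log t - C₄ * t ^ (2 * p - 2)

noncomputable def gfunDerivFactor (C₁ C₂ C₃ C₄ p : ℝ) (β : ℝ → ℝ) (t : ℝ) : ℝ :=
  C₁ * (deriv β t / t) / t ^ 2 + 4 * C₂ - C₃ * (4 * Real.log t + 1)
    - C₄ * (2 * p - 2) * t ^ (2 * p - 6)

section

variable {C₁ C₂ C₃ C₄ p : ℝ} {β : ℝ → ℝ}

theorem hasDerivAt_gfun {t : ℝ} (hβ : DifferentiableAt ℝ β t) (ht : 0 < t) :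
    HasDerivAt (gfun C₁ C₂ C₃ C₄ p β) (t ^ 3 * gfunDerivFactor C₁ C₂ C₃ C₄ p β t) t := by
  have h4 : HasDerivAt (fun s : ℝ => s ^ 4) (4 * t ^ 3) t := by
    simpa using hasDerivAt_pow 4 t
  have hg := (((hβ.hasDerivAt.const_mul C₁).add (h4.const_mul C₂)).sub
    ((h4.const_mul C₃).mul (Real.hasDerivAt_log ht.ne'))).sub
    ((Real.hasDerivAt_rpow_const (p := 2 * p - 2) (Or.inl ht.ne')).const_mul C₄)
  have hsplit : t ^ (2 * p - 2 - 1) = t ^ (2 * p - 6) * t ^ 3 := by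
    rw [← Real.rpow_natCast t 3, ← Real.rpow_add ht]
    congr 1
    push_cast
    ring
  refine (hg : HasDerivAt (gfun C₁ C₂ C₃ C₄ p β) _ t).congr_deriv ?_
  rw [gfunDerivFactor, hsplit]
  field_simp

theorem strictAntiOn_gfunDerivFactor (hmono : AntitoneOn (fun t => deriv β t / t) (Ioi 0))
    (hnonneg : ∀ t > (0 : ℝ), 0 ≤ deriv β t / t) (hC₁ : 0 ≤ C₁) (hC₃ : 0 < C₃) (hC₄ : 0 ≤ C₄)
    (hp : 3 ≤ p) : StrictAntiOn (gfunDerivFactor C₁ C₂ C₃ C₄ p β) (Ioi 0) := by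
  intro a (ha : 0 < a) b (hb : 0 < b) hab
  have hβterm : deriv β b / b / b ^ 2 ≤ deriv β a / a / a ^ 2 :=
    div_le_div₀ (hnonneg a ha) (hmono ha hb hab.le) (pow_pos ha 2) (by gcongr)
  have hlog : Real.log a < Real.log b := Real.log_lt_log ha hab
  have hrpow : a ^ (2 * p - 6) ≤ b ^ (2 * p - 6) :=
    Real.rpow_le_rpow ha.le hab.le (by linarith)
  have hC₄' : 0 ≤ C₄ * (2 * p - 2) := mul_nonneg hC₄ (by linarith)
  simp only [gfunDerivFactor, mul_div_assoc]
  nlinarith [mul_le_mul_of_nonneg_left hβterm hC₁, mul_le_mul_of_nonneg_left hrpow hC₄']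

theorem continuousOn_gfunDerivFactor (hβ : ContinuousOn (deriv β) (Ioi 0)) :
    ContinuousOn (gfunDerivFactor C₁ C₂ C₃ C₄ p β) (Ioi 0) := by
  unfold gfunDerivFactor
  fun_prop (disch := intro t (ht : 0 < t); positivity)

theorem le_gfunDerivFactor {m t : ℝ} (hbd : ∀ t > (0 : ℝ), m ≤ deriv β t / t)
    (hC₁ : 0 ≤ C₁) (hC₃ : 0 ≤ C₃) (hC₄ : 0 ≤ C₄) (hp : 3 ≤ p) (ht : 0 < t) (ht₁ : t ≤ 1) :
    C₁ * m / t ^ 2 + (4 * C₂ - C₃ - C₄ * (2 * p - 2)) ≤ gfunDerivFactor C₁ C₂ C₃ C₄ p β t := by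
  have hβterm : C₁ * m / t ^ 2 ≤ C₁ * (deriv β t / t) / t ^ 2 := by
    gcongr
    exact hbd t ht
  have hlog : Real.log t ≤ 0 := Real.log_nonpos ht.le ht₁
  have hrpow : t ^ (2 * p - 6) ≤ 1 := Real.rpow_le_one ht.le ht₁ (by linarith)
  have hC₄' : 0 ≤ C₄ * (2 * p - 2) := mul_nonneg hC₄ (by linarith)
  rw [gfunDerivFactor]
  nlinarith [mul_le_mul_of_nonneg_left hrpow hC₄']

theorem gfunDerivFactor_le {M t : ℝ} (hbd : ∀ t > (0 : ℝ), 0 ≤ deriv β t / t ∧ deriv β t / t ≤ M)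
    (hC₁ : 0 ≤ C₁) (hC₄ : 0 ≤ C₄) (hp : 3 ≤ p) (ht : 1 ≤ t) :
    gfunDerivFactor C₁ C₂ C₃ C₄ p β t ≤ C₁ * M + 4 * C₂ - C₃ * (4 * Real.log t + 1) := by
  have ht₀ : 0 < t := one_pos.trans_le ht
  have hβterm : C₁ * (deriv β t / t) / t ^ 2 ≤ C₁ * M := by
    have hnonneg : 0 ≤ C₁ * (deriv β t / t) := mul_nonneg hC₁ (hbd t ht₀).1
    calc C₁ * (deriv β t / t) / t ^ 2 ≤ C₁ * (deriv β t / t) :=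
          div_le_self hnonneg (one_le_pow₀ ht)
      _ ≤ C₁ * M := mul_le_mul_of_nonneg_left (hbd t ht₀).2 hC₁
  have hpow : 0 ≤ C₄ * (2 * p - 2) * t ^ (2 * p - 6) :=
    mul_nonneg (mul_nonneg hC₄ (by linarith)) (Real.rpow_nonneg ht₀.le _)
  rw [gfunDerivFactor]
  linarith

theorem exists_gfunDerivFactor_eq_zero {m M : ℝ} (hβ : ContinuousOn (deriv β) (Ioi 0))
    (hm : 0 < m) (hbd : ∀ t > (0 : ℝ), m ≤ deriv β t / t ∧ deriv β t / t ≤ M)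
    (hC₁ : 0 < C₁) (hC₃ : 0 < C₃) (hC₄ : 0 ≤ C₄) (hp : 3 ≤ p) :
    ∃ t₀ > (0 : ℝ), gfunDerivFactor C₁ C₂ C₃ C₄ p β t₀ = 0 := by
  set K := |4 * C₂ - C₃ - C₄ * (2 * p - 2)|
  set a := min 1 (C₁ * m / (K + 1))
  have ha : 0 < a := lt_min one_pos (by positivity)
  have hpos : 0 < gfunDerivFactor C₁ C₂ C₃ C₄ p β a := by
    have hKa : K + 1 ≤ C₁ * m / a := (le_div_iff₀ ha).2 <| by
      have := min_le_right 1 (C₁ * m / (K + 1))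
      rwa [le_div_iff₀ (by positivity), mul_comm] at this
    have ha2 : C₁ * m / a ≤ C₁ * m / a ^ 2 :=
      div_le_div_of_nonneg_left (by positivity) (by positivity)
        (pow_le_of_le_one ha.le (min_le_left _ _) two_ne_zero)
    have := le_gfunDerivFactor (C₂ := C₂) (fun t ht => (hbd t ht).1) hC₁.le hC₃.le hC₄ hp ha
      (min_le_left _ _)
    linarith [neg_abs_le (4 * C₂ - C₃ - C₄ * (2 * p - 2))]
  set b := Real.exp (max 0 ((C₁ * M + 4 * C₂) / (4 * C₃)))
  have hb : 1 ≤ b := Real.one_le_exp (le_max_left _ _)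
  have hneg : gfunDerivFactor C₁ C₂ C₃ C₄ p β b < 0 := by
    have hlog : C₁ * M + 4 * C₂ ≤ 4 * C₃ * Real.log b := by
      rw [Real.log_exp, ← div_le_iff₀' (by positivity)]
      exact le_max_right _ _
    have := gfunDerivFactor_le (C₂ := C₂) (C₃ := C₃)
      (fun t ht => ⟨hm.le.trans (hbd t ht).1, (hbd t ht).2⟩) hC₁.le hC₄ hp hb
    linarith
  obtain ⟨t₀, ht₀, hzero⟩ := (convex_Ioi (0 : ℝ)).isPreconnected.intermediate_value
    (show b ∈ Ioi 0 from one_pos.trans_le hb) (show a ∈ Ioi 0 from ha)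
    (continuousOn_gfunDerivFactor hβ) ⟨hneg.le, hpos.le⟩
  exact ⟨t₀, ht₀, hzero⟩

end

theorem stmt6 (β : ℝ → ℝ) (hβ : ContDiffOn ℝ 1 β (Set.Ioi 0))
    (hmono : AntitoneOn (fun t => deriv β t / t) (Set.Ioi 0))
    (m M : ℝ) (hm : 0 < m)
    (hbd : ∀ t > (0 : ℝ), m ≤ deriv β t / t ∧ deriv β t / t ≤ M)
    (C₁ C₂ C₃ C₄ p : ℝ) (hC₁ : 0 < C₁) (hC₃ : 0 < C₃) (hC₄ : 0 ≤ C₄) (hp : 3 ≤ p) :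
    ∃ t₀ > (0 : ℝ), deriv (gfun C₁ C₂ C₃ C₄ p β) t₀ = 0 ∧
      (∀ t > (0 : ℝ), deriv (gfun C₁ C₂ C₃ C₄ p β) t = 0 → t = t₀) ∧
      (∀ t : ℝ, 0 < t → t < t₀ → 0 < deriv (gfun C₁ C₂ C₃ C₄ p β) t) ∧
      (∀ t : ℝ, t₀ < t → deriv (gfun C₁ C₂ C₃ C₄ p β) t < 0) := by
  set h := gfunDerivFactor C₁ C₂ C₃ C₄ p β
  have hderiv : ∀ t > (0 : ℝ), deriv (gfun C₁ C₂ C₃ C₄ p β) t = t ^ 3 * h t := fun t ht =>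
    (hasDerivAt_gfun ((hβ.differentiableOn one_ne_zero).differentiableAt
      (isOpen_Ioi.mem_nhds ht)) ht).deriv
  have hanti : StrictAntiOn h (Ioi 0) := strictAntiOn_gfunDerivFactor hmono
    (fun t ht => hm.le.trans (hbd t ht).1) hC₁.le hC₃ hC₄ hp
  obtain ⟨t₀, ht₀, hzero⟩ : ∃ t₀ > (0 : ℝ), h t₀ = 0 := exists_gfunDerivFactor_eq_zero
    (hβ.continuousOn_deriv_of_isOpen isOpen_Ioi le_rfl) hm hbd hC₁ hC₃ hC₄ hp
  refine ⟨t₀, ht₀, by rw [hderiv t₀ ht₀, hzero, mul_zero], fun t ht hcrit => ?_,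
    fun t ht hlt => ?_, fun t hlt => ?_⟩
  · rw [hderiv t ht, mul_eq_zero] at hcrit
    exact hanti.injOn ht ht₀ ((hcrit.resolve_left (pow_pos ht 3).ne').trans hzero.symm)
  · rw [hderiv t ht]
    exact mul_pos (by positivity) (hzero ▸ hanti ht ht₀ hlt)
  · have ht : 0 < t := ht₀.trans hlt
    rw [hderiv t ht]
    exact mul_neg_of_pos_of_neg (by positivity) (hzero ▸ hanti ht₀ ht hlt)
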